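/- arXiv:2402.13959 — 7 statements merged into one kernel-verified Lean document; each statement's English description precedes it below -/
import Mathlib

section
/- Let α ∈ (0,1/2) and q₁, q₃ ∈ (0,1) be real numbers. If (12α+3)q₃ + (3-4α)q₁ > 8α+3 and (4α+1)/(1-q₃) + (3-4α)/(1-q₁) < 8(4α+3)/3, then q₁ > 1/4. -/
theorem stmt_4 (α q₁ q₃ : ℝ) (hα : 0 < α) (hα' : α < 1/2)
    (hq₁ : 0 < q₁) (hq₁' : q₁ < 1) (hq₃ : 0 < q₃) (hq₃' : q₃ < 1)
    (h1 : (12*α+3)*q₃ + (3-4*α)*q₁ > 8*α+3)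
    (h2 : (4*α+1)/(1-q₃) + (3-4*α)/(1-q₁) < 8*(4*α+3)/3) :
    q₁ > 1/4 := by
  have hu : 0 < 1 - q₃ := by linarith
  have hv : 0 < 1 - q₁ := by linarith
  rw [div_add_div _ _ (ne_of_gt hu) (ne_of_gt hv),
    div_lt_div_iff₀ (by positivity) (by norm_num)] at h2
  by_contra h
  push_neg at h
  set C : ℝ := 8*(4*α+3)*(1-q₁) - 3*(3-4*α) with hCdef
  have h3 : 3*(4*α+1)*(1-q₁) < (1-q₃) * C := by
    rw [hCdef]; nlinarith [h2]
  have hC : 0 < C := by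
    by_contra hc
    push_neg at hc
    nlinarith [mul_nonneg hu.le (neg_nonneg.mpr hc)]
  nlinarith [mul_lt_mul_of_pos_right h1 hC,
    mul_lt_mul_of_pos_left h3 (by linarith : (0:ℝ) < 3*(4*α+1)),
    mul_nonneg (mul_nonneg (by linarith : (0:ℝ) ≤ 3-4*α)
      (by linarith : (0:ℝ) ≤ (1-q₁) - 3/4))
      (by nlinarith : (0:ℝ) ≤ (4*α+3)*(1-q₁) - 3/2)]
end

section
/- Let α ∈ (0,1/2) and q₁, q₃ ∈ (0,1) be real numbers. If 6q₃ + 2q₁ > 5 and (4α+1)/(1-q₃) + (3-4α)/(1-q₁) < 8(4α+3)/3, then q₁ > 1/4. -/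
theorem stmt_5 (α q₁ q₃ : ℝ) (hα : 0 < α) (hα' : α < 1/2)
    (hq₁ : 0 < q₁) (hq₁' : q₁ < 1) (hq₃ : 0 < q₃) (hq₃' : q₃ < 1)
    (h1 : 6*q₃ + 2*q₁ > 5)
    (h2 : (4*α+1)/(1-q₃) + (3-4*α)/(1-q₁) < 8*(4*α+3)/3) :
    q₁ > 1/4 := by
  by_contra h
  push_neg at h
  have ha : (0:ℝ) < 1 - q₃ := by linarith
  have hb : (0:ℝ) < 1 - q₁ := by linarith
  have e1 : (4*α+1)/(1-q₃) * (1-q₃) = 4*α+1 := div_mul_cancel₀ _ ha.ne'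
  have e2 : (3-4*α)/(1-q₁) * (1-q₁) = 3-4*α := div_mul_cancel₀ _ hb.ne'
  set u := (4*α+1)/(1-q₃) with hu_def
  set v := (3-4*α)/(1-q₁) with hv_def
  have hu : 0 < u := div_pos (by linarith) ha
  have hv : 0 < v := div_pos (by linarith) hb
  have hk : 0 < 3 - 2*(1-q₁) - 6*(1-q₃) := by linarith
  have t1 : 0 < u * (3 - 2*(1-q₁) - 6*(1-q₃)) := mul_pos hu hk
  have hM : 0 < 3 - 2*(1-q₁) := by linarith
  have t2 : 0 < (8*(4*α+3)/3 - (u+v)) * (3 - 2*(1-q₁)) :=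
    mul_pos (by linarith) hM
  have hb34 : 0 ≤ (1-q₁) - 3/4 := by linarith
  nlinarith [t1, t2, mul_pos hv hb, mul_nonneg hα.le hb34,
    mul_nonneg (mul_nonneg hα.le hb34) hb34, sq_nonneg ((1-q₁) - 3/4),
    mul_nonneg hb34 hb34, mul_pos hu ha, mul_pos hv hM,
    mul_nonneg t2.le hb.le, mul_nonneg t1.le hb.le]
end

section
/- Let α ∈ (0,1/2), q₁, q₃ ∈ (0,1). Then the steady-state ARQ comparison and steady-state population comparison agree: (4α+1)/(1-q₃)·((8α+6)q₃ − (8α+3)) > (3-4α)/(1-q₁)·((8α+3) − (8α+6)q₁) holds if and only if (4α+1)/(1-q₃) + (3-4α)/(1-q₁) > 8(4α+3)/3. -/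
theorem stmt_9 (α q₁ q₃ : ℝ) (hα : 0 < α) (hα' : α < 1/2)
    (hq₁ : 0 < q₁) (hq₁' : q₁ < 1) (hq₃ : 0 < q₃) (hq₃' : q₃ < 1) :
    (4*α+1)/(1-q₃) * ((8*α+6)*q₃ - (8*α+3)) > (3-4*α)/(1-q₁) * ((8*α+3) - (8*α+6)*q₁) ↔
    (4*α+1)/(1-q₃) + (3-4*α)/(1-q₁) > 8*(4*α+3)/3 := by
  have h3 : (0:ℝ) < 1 - q₃ := by linarith
  have h1 : (0:ℝ) < 1 - q₁ := by linarith
  rw [gt_iff_lt, gt_iff_lt, div_mul_eq_mul_div, div_mul_eq_mul_div,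
    div_lt_div_iff₀ h1 h3, div_add_div _ _ (ne_of_gt h3) (ne_of_gt h1),
    lt_div_iff₀ (mul_pos h3 h1), div_mul_eq_mul_div, div_lt_iff₀ (by norm_num : (0:ℝ) < 3)]
  constructor <;> intro h <;> nlinarith [h, mul_pos h3 h1]
end

section
/- For all α ∈ (0,1/2), the pair q₁ = (20α+9)/(8(4α+3)) and q₃ = 9(12α+7)/(32(4α+3)) satisfies both (12α+3)q₃ + (3-4α)q₁ > 8α+3 and (4α+1)/(1-q₃) + (3-4α)/(1-q₁) < 8(4α+3)/3. -/
theorem stmt_11 (α : ℝ) (hα : 0 < α) (hα' : α < 1/2) :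
    (12*α+3)*(9*(12*α+7)/(32*(4*α+3))) + (3-4*α)*((20*α+9)/(8*(4*α+3))) > 8*α+3 ∧
    (4*α+1)/(1-9*(12*α+7)/(32*(4*α+3))) + (3-4*α)/(1-(20*α+9)/(8*(4*α+3))) < 8*(4*α+3)/3 := by
  have h1 : (0:ℝ) < 4*α+3 := by linarith
  have h2 : (1:ℝ) - 9*(12*α+7)/(32*(4*α+3)) = (20*α+33)/(32*(4*α+3)) := by
    field_simp; ring
  have h3 : (1:ℝ) - (20*α+9)/(8*(4*α+3)) = (12*α+15)/(8*(4*α+3)) := by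
    field_simp; ring
  have h4 : (0:ℝ) < 20*α+33 := by linarith
  have h5 : (0:ℝ) < 12*α+15 := by linarith
  constructor
  · rw [gt_iff_lt, mul_div_assoc', mul_div_assoc',
      div_add_div _ _ (by positivity : (32*(4*α+3):ℝ) ≠ 0) (by positivity : (8*(4*α+3):ℝ) ≠ 0),
      lt_div_iff₀ (by positivity)]
    nlinarith [sq_nonneg α, sq_nonneg (α-1)]
  · rw [h2, h3, div_div_eq_mul_div, div_div_eq_mul_div,
      div_add_div _ _ (ne_of_gt h4) (ne_of_gt h5),
      div_lt_div_iff₀ (by positivity) (by norm_num)]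
    nlinarith [sq_nonneg α, sq_nonneg (α-1), sq_nonneg (α*α), mul_pos hα hα]
end

section
/- For all α ∈ (0,1/2) with α ≠ 0, the pair q₁ = (16α+3)/(4(4α+3)) and q₃ = 3(16α²+20α+9)/(4(4α+3)²) satisfies both 6q₃ + 2q₁ > 5 and (4α+1)/(1-q₃) + (3-4α)/(1-q₁) < 8(4α+3)/3. -/
theorem stmt_14 (α : ℝ) (hα : 0 < α) (hα' : α < 1/2) (hα0 : α ≠ 0) :
    6*(3*(16*α^2+20*α+9)/(4*(4*α+3)^2)) + 2*((16*α+3)/(4*(4*α+3))) > 5 ∧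
    (4*α+1)/(1-3*(16*α^2+20*α+9)/(4*(4*α+3)^2)) + (3-4*α)/(1-(16*α+3)/(4*(4*α+3)))
      < 8*(4*α+3)/3 := by
  have h3 : (0:ℝ) < 4*α+3 := by linarith
  have h3' : (4*α+3) ≠ 0 := ne_of_gt h3
  constructor
  · have key : 6*(3*(16*α^2+20*α+9)/(4*(4*α+3)^2)) + 2*((16*α+3)/(4*(4*α+3))) - 5
        = 24*α^2/((4*α+3)^2) := by
      field_simp; ring
    have hpos : (0:ℝ) < 24*α^2/((4*α+3)^2) := by positivity
    linarith
  · have hq3 : 1-3*(16*α^2+20*α+9)/(4*(4*α+3)^2) = (16*α^2+36*α+9)/(4*(4*α+3)^2) := by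
      field_simp; ring
    have hq1 : 1-(16*α+3)/(4*(4*α+3)) = 9/(4*(4*α+3)) := by
      field_simp; ring
    have hd : (0:ℝ) < 16*α^2+36*α+9 := by nlinarith
    rw [hq3, hq1, div_div_eq_mul_div, div_div_eq_mul_div,
      div_add_div _ _ (ne_of_gt hd) (by norm_num : (9:ℝ) ≠ 0),
      div_lt_div_iff₀ (by positivity) (by norm_num : (0:ℝ) < 3)]
    nlinarith [sq_nonneg (α*(4*α+3)), sq_nonneg α, mul_pos hα h3, sq_nonneg (α*α)]
end

section
/- Let q₁*, q₃* ∈ (0,1) with q₁* ≠ q₃*. Define q₁ = (3q₁* + q₃* − (q₁*)² − 3q₁*q₃*)/(2(2 − q₁* − q₃*)) and q₃ = (5(q₁*)²q₃* + 10q₁*(q₃*)² + (q₃*)³ − (q₁*)² − 22q₁*q₃* − 9(q₃*)² + 4q₁* + 12q₃*)/(4(2 − q₁* − q₃*)²). Then (1−q₃)/(1−q₃*) + (1−q₁)/(1−q₁*) − 2 = −(q₁* − q₃*)²/(4(2 − q₁* − q₃*)²) < 0. -/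
theorem stmt_17 (q₁s q₃s : ℝ) (h₁ : 0 < q₁s) (h₁' : q₁s < 1)
    (h₃ : 0 < q₃s) (h₃' : q₃s < 1) (hne : q₁s ≠ q₃s)
    (q₁ q₃ : ℝ)
    (hq₁ : q₁ = (3*q₁s + q₃s - q₁s^2 - 3*q₁s*q₃s)/(2*(2 - q₁s - q₃s)))
    (hq₃ : q₃ = (5*q₁s^2*q₃s + 10*q₁s*q₃s^2 + q₃s^3 - q₁s^2 - 22*q₁s*q₃s - 9*q₃s^2 + 4*q₁s + 12*q₃s)/(4*(2 - q₁s - q₃s)^2)) :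
    (1-q₃)/(1-q₃s) + (1-q₁)/(1-q₁s) - 2 = -(q₁s - q₃s)^2/(4*(2 - q₁s - q₃s)^2) ∧
    -(q₁s - q₃s)^2/(4*(2 - q₁s - q₃s)^2) < 0 := by
  have hd : (2 : ℝ) - q₁s - q₃s ≠ 0 := by nlinarith
  have h1 : (1 : ℝ) - q₁s ≠ 0 := by linarith
  have h3 : (1 : ℝ) - q₃s ≠ 0 := by linarith
  constructor
  · subst hq₁ hq₃
    field_simp
    ring
  · apply div_neg_of_neg_of_pos
    · have h2 : q₁s - q₃s ≠ 0 := sub_ne_zero.mpr hne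
      have hp : 0 < (q₁s - q₃s)^2 := by positivity
      linarith
    · positivity
end

section
/- Let q₁*, q₃* ∈ (0,1) with q₁* ≠ q₃*, and define q₁, q₃ as in Corollary 2: q₁ = (3q₁* + q₃* − (q₁*)² − 3q₁*q₃*)/(2(2 − q₁* − q₃*)), q₃ = (5(q₁*)²q₃* + 10q₁*(q₃*)² + (q₃*)³ − (q₁*)² − 22q₁*q₃* − 9(q₃*)² + 4q₁* + 12q₃*)/(4(2 − q₁* − q₃*)²). Then 1/(1−q₃) + 1/(1−q₁) − 1/(1−q₃*) − 1/(1−q₁*) = −(2−q₁*−q₃*)²(q₁*−q₃*)² / [ (1−q₁*)(1−q₃*)((2q₁*+q₃*−3)² + (1−q₁*)(7−q₁*−6q₃*))(4−q₁*−3q₃*) ], which is strictly negative. -/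
/-!
`1 - q₁` and `1 - q₃` factor as `1 - q₁*` and `1 - q₃*` times rational factors whose numerators
`4 - q₁* - 3q₃*` and `disc q₁* q₃*` are positive as soon as `q₁*, q₃* < 1`. With these factorisations the
identity is one of rational functions, and its right-hand side is a negative square over a positive product.
-/

noncomputable section

namespace Corollary2

def q₁ (x y : ℝ) : ℝ := (3*x + y - x^2 - 3*x*y)/(2*(2 - x - y))

def q₃ (x y : ℝ) : ℝ :=
  (5*x^2*y + 10*x*y^2 + y^3 - x^2 - 22*x*y - 9*y^2 + 4*x + 12*y)/(4*(2 - x - y)^2)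

def disc (x y : ℝ) : ℝ := (2*x + y - 3)^2 + (1 - x)*(7 - x - 6*y)

variable {x y : ℝ}

lemma disc_pos (hx : x < 1) (hy : y < 1) : 0 < disc x y := by
  have : 0 < (1 - x)*(7 - x - 6*y) := mul_pos (by linarith) (by linarith)
  unfold disc
  positivity

lemma one_sub_q₁ (hxy : x + y ≠ 2) : 1 - q₁ x y = (1 - x)*(4 - x - 3*y)/(2*(2 - x - y)) := by
  have : 2 - x - y ≠ 0 := fun h => hxy (by linarith)
  unfold q₁
  field_simp
  ring

lemma one_sub_q₃ (hxy : x + y ≠ 2) : 1 - q₃ x y = (1 - y)*disc x y/(4*(2 - x - y)^2) := by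
  have : 2 - x - y ≠ 0 := fun h => hxy (by linarith)
  unfold q₃ disc
  field_simp
  ring

lemma population_sub_eq (hx : x < 1) (hy : y < 1) :
    1/(1 - q₃ x y) + 1/(1 - q₁ x y) - 1/(1 - y) - 1/(1 - x)
      = -((2 - x - y)^2*(x - y)^2) / ((1 - x)*(1 - y)*disc x y*(4 - x - 3*y)) := by
  have hs : 2 - x - y ≠ 0 := by linarith
  have ha : 1 - x ≠ 0 := by linarith
  have hb : 1 - y ≠ 0 := by linarith
  have hE : 4 - x - 3*y ≠ 0 := by linarith
  have hD : disc x y ≠ 0 := (disc_pos hx hy).ne'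
  rw [one_sub_q₁ (by linarith), one_sub_q₃ (by linarith)]
  -- without this, `field_simp` fails to cancel the factor `4 - x - 3*y`
  generalize hE' : 4 - x - 3*y = E at hE ⊢
  field_simp
  rw [← hE']
  unfold disc
  ring

lemma population_sub_neg (hx : x < 1) (hy : y < 1) (hxy : x ≠ y) :
    -((2 - x - y)^2*(x - y)^2) / ((1 - x)*(1 - y)*disc x y*(4 - x - 3*y)) < 0 := by
  have hs : 2 - x - y ≠ 0 := by linarith
  have hd : x - y ≠ 0 := sub_ne_zero.mpr hxy
  have ha : 0 < 1 - x := by linarith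
  have hb : 0 < 1 - y := by linarith
  have hE : 0 < 4 - x - 3*y := by linarith
  have hD := disc_pos hx hy
  exact div_neg_of_neg_of_pos (by simp only [neg_neg_iff_pos]; positivity) (by positivity)

end Corollary2

end

open Corollary2 in
theorem stmt_18_general (q₁s q₃s : ℝ) (h₁' : q₁s < 1)
    (h₃' : q₃s < 1) (hne : q₁s ≠ q₃s)
    (q₁ q₃ : ℝ)
    (hq₁ : q₁ = (3*q₁s + q₃s - q₁s^2 - 3*q₁s*q₃s)/(2*(2 - q₁s - q₃s)))
    (hq₃ : q₃ = (5*q₁s^2*q₃s + 10*q₁s*q₃s^2 + q₃s^3 - q₁s^2 - 22*q₁s*q₃s - 9*q₃s^2 + 4*q₁s + 12*q₃s)/(4*(2 - q₁s - q₃s)^2)) :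
    1/(1-q₃) + 1/(1-q₁) - 1/(1-q₃s) - 1/(1-q₁s)
      = -((2-q₁s-q₃s)^2*(q₁s-q₃s)^2) /
        ((1-q₁s)*(1-q₃s)*((2*q₁s+q₃s-3)^2 + (1-q₁s)*(7-q₁s-6*q₃s))*(4-q₁s-3*q₃s)) ∧
    -((2-q₁s-q₃s)^2*(q₁s-q₃s)^2) /
        ((1-q₁s)*(1-q₃s)*((2*q₁s+q₃s-3)^2 + (1-q₁s)*(7-q₁s-6*q₃s))*(4-q₁s-3*q₃s)) < 0 := by
  subst hq₁ hq₃
  exact ⟨population_sub_eq h₁' h₃', population_sub_neg h₁' h₃' hne⟩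

theorem stmt_18 (q₁s q₃s : ℝ) (h₁ : 0 < q₁s) (h₁' : q₁s < 1)
    (h₃ : 0 < q₃s) (h₃' : q₃s < 1) (hne : q₁s ≠ q₃s)
    (q₁ q₃ : ℝ)
    (hq₁ : q₁ = (3*q₁s + q₃s - q₁s^2 - 3*q₁s*q₃s)/(2*(2 - q₁s - q₃s)))
    (hq₃ : q₃ = (5*q₁s^2*q₃s + 10*q₁s*q₃s^2 + q₃s^3 - q₁s^2 - 22*q₁s*q₃s - 9*q₃s^2 + 4*q₁s + 12*q₃s)/(4*(2 - q₁s - q₃s)^2)) :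
    1/(1-q₃) + 1/(1-q₁) - 1/(1-q₃s) - 1/(1-q₁s)
      = -((2-q₁s-q₃s)^2*(q₁s-q₃s)^2) /
        ((1-q₁s)*(1-q₃s)*((2*q₁s+q₃s-3)^2 + (1-q₁s)*(7-q₁s-6*q₃s))*(4-q₁s-3*q₃s)) ∧
    -((2-q₁s-q₃s)^2*(q₁s-q₃s)^2) /
        ((1-q₁s)*(1-q₃s)*((2*q₁s+q₃s-3)^2 + (1-q₁s)*(7-q₁s-6*q₃s))*(4-q₁s-3*q₃s)) < 0 :=
  stmt_18_general q₁s q₃s h₁' h₃' hne q₁ q₃ hq₁ hq₃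
end
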